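/- arXiv:math/0511423 — 5 statements merged into one kernel-verified Lean document; each statement's English description precedes it below -/
import Mathlib

section
/- Suppose x ∈ M does not lie in Fil¹M, where M is a strongly divisible module with adapted basis (e₁,…,e_d) for integers n₁,…,n_d ∈ {0,1}. Then there exists f ∈ Fil¹M^∨ (i.e., an S-linear f: M → S with f(Fil¹M) ⊆ Fil¹S) such that f(x) ∉ Fil¹S. Explicitly, writing x = Σ sᵢeᵢ, some sᵢ ∉ Filⁿⁱ S, and f defined by f(eᵢ) = E(u)^{1−nᵢ}, f(eⱼ) = 0 for j ≠ i, works. -/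
/-! Since `Fil⁰S = S`, a coordinate `sᵢ ∉ Filⁿⁱ S` forces `nᵢ = 1`; then `E^{1−nᵢ} = 1`, and the
`i`-th coordinate functional of the adapted basis already maps `Fil¹M` into `Fil¹S` and `x` outside. -/

theorem Ideal.eq_one_of_notMem_pow {R : Type*} [CommSemiring R] {I : Ideal R} {s : R} {k : ℕ}
    (hk : k ≤ 1) (hs : s ∉ I ^ k) : k = 1 := by
  obtain rfl | rfl : k = 0 ∨ k = 1 := by omega
  · exact absurd (by simp) hs
  · rfl

section AdaptedBasis

variable {S M ι : Type*} [CommRing S] [AddCommGroup M] [Module S M]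
  {b : Module.Basis ι S M} {FilS : Ideal S} {n : ι → ℕ} {FilM : Submodule S M}

theorem Module.Basis.exists_repr_notMem_pow_of_notMem
    (hadapted : ∀ y : M, y ∈ FilM ↔ ∀ i, b.repr y i ∈ FilS ^ n i) {x : M} (hx : x ∉ FilM) :
    ∃ i, b.repr x i ∉ FilS ^ n i := by
  simpa [hadapted] using hx

theorem Module.Basis.repr_mem_of_mem_of_eq_one
    (hadapted : ∀ y : M, y ∈ FilM ↔ ∀ i, b.repr y i ∈ FilS ^ n i) {i : ι} (hni : n i = 1)
    {y : M} (hy : y ∈ FilM) : b.repr y i ∈ FilS := by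
  simpa [hni] using (hadapted y).mp hy i

end AdaptedBasis

theorem stmt_7_general {S : Type*} [CommRing S]
    (FilS : Ideal S) (E : S)
    {M : Type*} [AddCommGroup M] [Module S M]
    {d : ℕ} (b : Module.Basis (Fin d) S M)
    (n : Fin d → ℕ) (hn : ∀ i, n i ≤ 1)
    (FilM : Submodule S M)
    (hadapted : ∀ y : M, y ∈ FilM ↔ ∀ i, b.repr y i ∈ (FilS ^ (n i) : Ideal S))
    (x : M) (hx : x ∉ FilM) :
    (∃ f : M →ₗ[S] S, (∀ y ∈ FilM, f y ∈ FilS) ∧ f x ∉ FilS) ∧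
      ∃ i : Fin d, b.repr x i ∉ (FilS ^ (n i) : Ideal S) ∧
        (∀ y ∈ FilM, E ^ (1 - n i) * b.repr y i ∈ FilS) ∧
        E ^ (1 - n i) * b.repr x i ∉ FilS := by
  obtain ⟨i, hi⟩ := b.exists_repr_notMem_pow_of_notMem hadapted hx
  have hni : n i = 1 := Ideal.eq_one_of_notMem_pow (hn i) hi
  have hxi : b.repr x i ∉ FilS := by simpa [hni] using hi
  have hFil : ∀ y ∈ FilM, b.repr y i ∈ FilS := fun y ↦ b.repr_mem_of_mem_of_eq_one hadapted hni
  refine ⟨⟨b.coord i, fun y hy ↦ by simpa using hFil y hy, by simpa using hxi⟩, i, hi, ?_, ?_⟩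
  · simpa [hni] using hFil
  · simpa [hni] using hxi

/-- (Separation step in Proposition 2.1.4.)  Let `M` be strongly
divisible with adapted basis `(e₁,…,e_d)` for integers `nᵢ ∈ {0,1}`, and let
`x ∉ Fil¹M`.  Then there is `f ∈ Fil¹M^∨` (an `S`-linear `f : M → S` with
`f(Fil¹M) ⊆ Fil¹S`) such that `f(x) ∉ Fil¹S`.  Explicitly, writing `x = Σ sᵢeᵢ`,
some `sᵢ ∉ Filⁿⁱ S`, and the functional `eᵢ ↦ E^{1−nᵢ}`, `eⱼ ↦ 0 (j ≠ i)` works: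
i.e. `y ↦ E^{1−nᵢ}·(coordinate i of y)` maps `Fil¹M` into `Fil¹S` but `x`
outside of `Fil¹S`. -/
theorem stmt_7 {S : Type*} [CommRing S]
    (FilS : Ideal S) (E : S) (hE : E ∈ FilS)
    {M : Type*} [AddCommGroup M] [Module S M]
    {d : ℕ} (b : Module.Basis (Fin d) S M)
    (n : Fin d → ℕ) (hn : ∀ i, n i ≤ 1)
    (FilM : Submodule S M)
    (hadapted : ∀ y : M, y ∈ FilM ↔ ∀ i, b.repr y i ∈ (FilS ^ (n i) : Ideal S))
    (x : M) (hx : x ∉ FilM) :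
    (∃ f : M →ₗ[S] S, (∀ y ∈ FilM, f y ∈ FilS) ∧ f x ∉ FilS) ∧
      ∃ i : Fin d, b.repr x i ∉ (FilS ^ (n i) : Ideal S) ∧
        (∀ y ∈ FilM, E ^ (1 - n i) * b.repr y i ∈ FilS) ∧
        E ^ (1 - n i) * b.repr x i ∉ FilS :=
  stmt_7_general FilS E b n hn FilM hadapted x hx
end

section
/- Let S be an integral domain, p ∈ S nonzero, M̂ a free S-module, M̂′ ⊆ M̂ a submodule such that M := M̂/M̂′ is killed by pⁿ. Let S_{K₀} = S[1/p] and S_∞ := S_{K₀}/S. Then every S-linear map f: M̂′ → S that becomes zero in Hom_S(M, S_∞) (under the boundary map sending f to x ↦ class of p^{-n} f(pⁿ x̂)) extends to an S-linear map M̂ → S. -/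
/-- (Middle exactness in Lemma 2.2.2.)  Let `S` be an integral
domain, `p ≠ 0` in `S`, `M̂` a free `S`-module and `M̂′ ⊆ M̂` a submodule with
`M = M̂/M̂′` killed by `pⁿ`.  If `f : M̂′ → S` is `S`-linear and the associated
boundary element of `Hom_S(M, S_∞)` vanishes — i.e. `f(pⁿ·x) ∈ pⁿS` for all
`x ∈ M̂` — then `f` extends to an `S`-linear map `M̂ → S`. -/
theorem stmt_10 {S : Type*} [CommRing S] [IsDomain S] (p : S) (hp : p ≠ 0)
    {Mhat : Type*} [AddCommGroup Mhat] [Module S Mhat] [Module.Free S Mhat]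
    (M' : Submodule S Mhat) (n : ℕ)
    (hquot : ∀ x : Mhat, p ^ n • x ∈ M')
    (f : M' →ₗ[S] S)
    (hzero : ∀ x : Mhat, ∃ s : S, f ⟨p ^ n • x, hquot x⟩ = p ^ n * s) :
    ∃ g : Mhat →ₗ[S] S, ∀ y : M', g (y : Mhat) = f y := by
  have hpn : (p : S) ^ n ≠ 0 := pow_ne_zero n hp
  set g₀ : Mhat → S := fun x => (hzero x).choose with hg₀
  have hspec : ∀ x : Mhat, p ^ n * g₀ x = f ⟨p ^ n • x, hquot x⟩ :=
    fun x => ((hzero x).choose_spec).symm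
  have hadd : ∀ x y : Mhat, g₀ (x + y) = g₀ x + g₀ y := by
    intro x y
    apply mul_left_cancel₀ hpn
    rw [mul_add, hspec, hspec, hspec]
    rw [show (⟨p ^ n • (x + y), hquot (x + y)⟩ : M')
        = ⟨p ^ n • x, hquot x⟩ + ⟨p ^ n • y, hquot y⟩ by
      apply Subtype.ext; simp [smul_add]]
    exact map_add f _ _
  have hsmul : ∀ (c : S) (x : Mhat), g₀ (c • x) = c * g₀ x := by
    intro c x
    apply mul_left_cancel₀ hpn
    rw [hspec]
    rw [show (⟨p ^ n • (c • x), hquot (c • x)⟩ : M')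
        = c • ⟨p ^ n • x, hquot x⟩ by
      apply Subtype.ext; exact smul_comm _ _ _]
    rw [map_smul, smul_eq_mul, ← hspec]; ring
  refine ⟨{ toFun := g₀, map_add' := hadd, map_smul' := hsmul }, ?_⟩
  intro y
  apply mul_left_cancel₀ hpn
  simp only [LinearMap.coe_mk, AddHom.coe_mk]
  rw [hspec]
  rw [show (⟨p ^ n • (y : Mhat), hquot y⟩ : M') = p ^ n • y by
    apply Subtype.ext; simp]
  rw [map_smul, smul_eq_mul]
end

section
/- With notation of Lemma 2.2.2 (0 → M̂′ → M̂ → M → 0 with M̂, M̂′ free S-modules, M killed by a power of p, S an integral domain with S[1/p]/S =: S_∞): the sequence 0 → Hom_S(M̂, S) → Hom_S(M̂′, S) → Hom_S(M, S_∞) → 0 is exact, where the last map is the boundary map f ↦ (x ↦ class of p^{-n}f(pⁿx̂)). -/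
/-- (Lemma 2.2.2, dual exactness.)  Let `S` be an integral
domain, `p ≠ 0`, `M̂` a finite free `S`-module, `M̂′ ⊆ M̂` a (free) submodule with
`M = M̂/M̂′` killed by `pⁿ`, and `S_∞ = S[1/p]/S`.  Then the sequence
`0 → Hom_S(M̂,S) → Hom_S(M̂′,S) → Hom_S(M,S_∞) → 0` is exact, where the first map
is restriction and the second is the boundary map
`f ↦ (x ↦ class of p^{-n} f(pⁿ x̂))`. -/
theorem stmt_11 {S : Type*} [CommRing S] [IsDomain S] (p : S) (hp : p ≠ 0)
    {Mhat : Type*} [AddCommGroup Mhat] [Module S Mhat]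
    [Module.Free S Mhat] [Module.Finite S Mhat]
    (M' : Submodule S Mhat) [Module.Free S M']
    (n : ℕ) (hquot : ∀ x : Mhat, p ^ n • x ∈ M') :
    -- injectivity of the restriction map Hom_S(M̂,S) → Hom_S(M̂′,S)
    (∀ g₁ g₂ : Mhat →ₗ[S] S, (∀ y : M', g₁ (y : Mhat) = g₂ (y : Mhat)) → g₁ = g₂) ∧
      -- exactness at Hom_S(M̂′,S): f lies in the image of restriction iff the
      -- boundary of f vanishes, i.e. f(pⁿx) ∈ pⁿS for all x
      (∀ f : M' →ₗ[S] S,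
        ((∃ g : Mhat →ₗ[S] S, ∀ y : M', g (y : Mhat) = f y) ↔
          ∀ x : Mhat, ∃ s : S, f ⟨p ^ n • x, hquot x⟩ = p ^ n * s)) ∧
      -- surjectivity of the boundary map onto Hom_S(M, S_∞), with
      -- S_∞ = S[1/p]/S realized as Localization.Away p modulo the image of S
      (∀ h : (Mhat ⧸ M') →ₗ[S]
          ((Localization.Away p) ⧸
            LinearMap.range (Algebra.linearMap S (Localization.Away p))),
        ∃ f : M' →ₗ[S] S, ∀ x : Mhat,
          h (Submodule.Quotient.mk x) =
            Submodule.Quotient.mk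
              (Localization.mk (f ⟨p ^ n • x, hquot x⟩) (⟨p ^ n, ⟨n, rfl⟩⟩ : Submonoid.powers p))) := by

  have hpn : (p : S) ^ n ≠ 0 := pow_ne_zero n hp
  refine ⟨?_, ?_, ?_⟩
  · intro g₁ g₂ hg
    ext x
    have h1 := hg ⟨p ^ n • x, hquot x⟩
    simp only [map_smul, smul_eq_mul] at h1
    exact mul_left_cancel₀ hpn h1
  · intro f
    constructor
    · rintro ⟨g, hg⟩ x
      refine ⟨g x, ?_⟩
      rw [← hg ⟨p ^ n • x, hquot x⟩]
      simp [map_smul, smul_eq_mul]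
    · intro hf
      choose c hc using hf
      have hadd : ∀ x y, c (x + y) = c x + c y := by
        intro x y
        apply mul_left_cancel₀ hpn
        have h1 : (⟨p ^ n • (x + y), hquot (x + y)⟩ : M') =
            ⟨p ^ n • x, hquot x⟩ + ⟨p ^ n • y, hquot y⟩ := by
          ext; simp [smul_add]
        rw [mul_add, ← hc, ← hc, ← hc, h1, map_add]
      have hsmul : ∀ (s : S) x, c (s • x) = s * c x := by
        intro s x
        apply mul_left_cancel₀ hpn
        have h1 : (⟨p ^ n • (s • x), hquot (s • x)⟩ : M') =
            s • (⟨p ^ n • x, hquot x⟩ : M') := by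
          ext
          simp only [SetLike.val_smul]
          exact smul_comm _ _ _
        rw [← hc, h1, map_smul, smul_eq_mul, hc, mul_left_comm]
      refine ⟨⟨⟨c, fun x y => hadd x y⟩, fun s x => hsmul s x⟩, ?_⟩
      intro y
      apply mul_left_cancel₀ hpn
      have h1 : (⟨p ^ n • (y : Mhat), hquot y⟩ : M') = p ^ n • y := by ext; rfl
      show p ^ n * c (y : Mhat) = p ^ n * f y
      rw [← hc, h1, map_smul, smul_eq_mul]
  · intro h
    let A := Localization.Away p
    let alg := Algebra.linearMap S A
    have hsub : Submonoid.powers p ≤ nonZeroDivisors S :=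
      powers_le_nonZeroDivisors_of_noZeroDivisors hp
    have hinj : Function.Injective alg := IsLocalization.injective A hsub
    let b := Module.Free.chooseBasis S Mhat
    choose v hv using fun i =>
      Submodule.Quotient.mk_surjective (LinearMap.range alg)
        (h (Submodule.Quotient.mk (b i)))
    let g : Mhat →ₗ[S] A := b.constr S v
    have key : (LinearMap.range alg).mkQ ∘ₗ (b.constr S v) = h ∘ₗ M'.mkQ := by
      apply b.ext
      intro i
      show Submodule.Quotient.mk ((b.constr S v) (b i)) = h (Submodule.Quotient.mk (b i))
      rw [Module.Basis.constr_basis]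
      exact hv i
    have key' : ∀ x : Mhat, (Submodule.Quotient.mk (g x) :
        A ⧸ LinearMap.range alg) = h (Submodule.Quotient.mk x) :=
      fun x => LinearMap.congr_fun key x
    have hmem : ∀ y : M', g (y : Mhat) ∈ LinearMap.range alg := by
      intro y
      have h0 : (Submodule.Quotient.mk (g (y : Mhat)) : A ⧸ LinearMap.range alg) = 0 := by
        rw [key' (y : Mhat), (Submodule.Quotient.mk_eq_zero M').mpr y.2, map_zero]
      exact (Submodule.Quotient.mk_eq_zero _).mp h0
    choose c' hc' using fun y : M' => LinearMap.mem_range.mp (hmem y)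
    have cadd : ∀ a b : M', c' (a + b) = c' a + c' b := by
      intro a b
      apply hinj
      rw [map_add, hc', hc', hc', Submodule.coe_add, map_add]
    have csmul : ∀ (s : S) (a : M'), c' (s • a) = s • c' a := by
      intro s a
      apply hinj
      rw [map_smul, hc', hc', SetLike.val_smul, map_smul]
    let f : M' →ₗ[S] S := ⟨⟨c', fun a b => cadd a b⟩, fun s a => csmul s a⟩
    have hf : ∀ y : M', alg (f y) = g (y : Mhat) := fun y => hc' y
    refine ⟨f, ?_⟩
    intro x
    have h1 : alg (f ⟨p ^ n • x, hquot x⟩) = p ^ n • g x := by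
      rw [hf ⟨p ^ n • x, hquot x⟩]
      exact map_smul g (p ^ n) x
    have h2 : g x = Localization.mk (f ⟨p ^ n • x, hquot x⟩)
        (⟨p ^ n, ⟨n, rfl⟩⟩ : Submonoid.powers p) := by
      rw [Localization.mk_eq_mk', IsLocalization.eq_mk'_iff_mul_eq]
      show g x * algebraMap S A (p ^ n) = algebraMap S A (f ⟨p ^ n • x, hquot x⟩)
      rw [show algebraMap S A (f ⟨p ^ n • x, hquot x⟩) = alg (f ⟨p ^ n • x, hquot x⟩) from rfl,
        h1, Algebra.smul_def, mul_comm]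
    exact (key' x).symm.trans (congrArg Submodule.Quotient.mk h2)
end

section
/- Let R be a commutative ring complete for the I-adic topology where I is an ideal with divided powers γᵢ, and let x ∈ I. Then the series log(1+x) := Σ_{i≥1} (−1)^{i+1} (i−1)!·γᵢ(x) converges in R and defines a group homomorphism log: (1 + I, ×) → (I, +), i.e., log((1+x)(1+y)) = log(1+x) + log(1+y) for x, y ∈ I. -/
/-!
Put `λₙ = (-1)ⁿ⁺¹ (n-1)!` and `f_k(x) = Σₐ λ_{a+k} γₐ(x)`. Over `ℚ` this is the Taylor
expansion of the `k`-th derivative `λ_k (1 + x)⁻ᵏ` of `log (1 + x)`, and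
`f₀(x) = λ₀ + log (1 + x)`. Two formal facts replace calculus:
* Taylor's formula `f₀(x + w) = Σ_k γ_k(w) f_k(x)`, from `γₙ(x + w) = Σ γ_{n-k}(x) γ_k(w)`;
* `(1 + x) f_{k+1}(x) = -k f_k(x)` for `k ≥ 1` and `(1 + x) f₁(x) = 1`, from
  `λ_{n+1} = -n λₙ` and `n γₙ(x) = x γ_{n-1}(x)`; hence `(1 + x)ᵏ f_k(x) = λ_k` for `k ≥ 1`.
For `w = (1 + x) y` we have `γ_k(w) = (1 + x)ᵏ γ_k(y)`, so Taylor's formula collapses to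
`f₀(x + (1 + x) y) = f₀(x) + Σ_{k ≥ 1} λ_k γ_k(y)`, which is
`log ((1 + x)(1 + y)) = log (1 + x) + log (1 + y)`.
All sums are finite because the divided powers vanish in high degree.
-/

open Finset Nat

lemma Finset.sum_range_succ_eq_add_sum_Icc {M : Type*} [AddCommMonoid M] (f : ℕ → M) (N : ℕ) :
    ∑ i ∈ range (N + 1), f i = f 0 + ∑ i ∈ Icc 1 N, f i := by
  rw [range_succ_eq_Icc_zero, Icc_eq_cons_Ioc N.zero_le, sum_cons, ← Icc_add_one_left_eq_Ioc,
    zero_add]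

namespace DividedPowers

variable (A : Type*) [CommRing A]

-- The `n`-th derivative of `log (1 + X)` at `0` for `n ≥ 1`; the value at `n = 0` is junk.
def logCoeff (n : ℕ) : A := (-1) ^ (n + 1) * ((n - 1)! : A)

lemma logCoeff_succ_add_mul (n : ℕ) :
    logCoeff A (n + 1) + n * logCoeff A n = if n = 0 then 1 else 0 := by
  cases n with
  | zero => simp [logCoeff]
  | succ n =>
    rw [if_neg n.succ_ne_zero, logCoeff, logCoeff, add_tsub_cancel_right, add_tsub_cancel_right,
      factorial_succ]
    push_cast
    ring

variable {A} {I : Ideal A} (hI : DividedPowers I) {x y : A}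

-- `log (1 + x)`, truncated at degree `N`.
def log (N : ℕ) (x : A) : A := ∑ i ∈ Icc 1 N, logCoeff A i * hI.dpow i x

lemma log_mem (N : ℕ) (hx : x ∈ I) : hI.log N x ∈ I :=
  I.sum_mem fun i hi ↦ I.mul_mem_left _ (hI.dpow_mem (by grind) hx)

lemma log_eq_of_le {N M : ℕ} (hxN : ∀ i > N, hI.dpow i x = 0) (hNM : N ≤ M) :
    hI.log M x = hI.log N x := by
  refine (sum_subset (Icc_subset_Icc_right hNM) fun i hiM hiN ↦ ?_).symm
  rw [hxN i (by grind), mul_zero]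

-- The Taylor expansion at `x`, truncated at degree `N`, of the `k`-th derivative of
-- `log (1 + X)`.
def iteratedDerivLog (N k : ℕ) (x : A) : A :=
  ∑ a ∈ range (N + 1), logCoeff A (a + k) * hI.dpow a x

lemma iteratedDerivLog_zero (N : ℕ) (hx : x ∈ I) :
    hI.iteratedDerivLog N 0 x = logCoeff A 0 + hI.log N x := by
  rw [iteratedDerivLog, sum_range_succ_eq_add_sum_Icc, hI.dpow_zero hx, mul_one]
  rfl

lemma succ_mul_dpow_succ (hx : x ∈ I) (n : ℕ) :
    ((n + 1 : ℕ) : A) * hI.dpow (n + 1) x = x * hI.dpow n x := by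
  have h := hI.mul_dpow (m := 1) (n := n) hx
  rwa [hI.dpow_one hx, add_comm 1 n, choose_one_right, eq_comm] at h

lemma sum_natCast_mul_dpow {N : ℕ} (hx : x ∈ I) (hxN : ∀ i > N, hI.dpow i x = 0) (c : ℕ → A) :
    ∑ a ∈ range (N + 1), (a : A) * c a * hI.dpow a x =
      x * ∑ a ∈ range (N + 1), c (a + 1) * hI.dpow a x := by
  calc ∑ a ∈ range (N + 1), (a : A) * c a * hI.dpow a x
      = ∑ a ∈ range (N + 2), (a : A) * c a * hI.dpow a x := by
        rw [sum_range_succ _ (N + 1), hxN (N + 1) N.lt_add_one, mul_zero, add_zero]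
    _ = ∑ a ∈ range (N + 1), ((a + 1 : ℕ) : A) * c (a + 1) * hI.dpow (a + 1) x := by
        rw [sum_range_succ', cast_zero, zero_mul, zero_mul, add_zero]
    _ = x * ∑ a ∈ range (N + 1), c (a + 1) * hI.dpow a x := by
        rw [mul_sum]
        refine sum_congr rfl fun a _ ↦ ?_
        rw [mul_right_comm, hI.succ_mul_dpow_succ hx]
        ring

lemma one_add_mul_iteratedDerivLog_succ {N : ℕ} (hx : x ∈ I) (hxN : ∀ i > N, hI.dpow i x = 0)
    (k : ℕ) :
    (1 + x) * hI.iteratedDerivLog N (k + 1) x + k * hI.iteratedDerivLog N k x =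
      if k = 0 then 1 else 0 := by
  have hshift : x * hI.iteratedDerivLog N (k + 1) x =
      ∑ a ∈ range (N + 1), (a : A) * logCoeff A (a + k) * hI.dpow a x := by
    rw [hI.sum_natCast_mul_dpow hx hxN]
    simp only [iteratedDerivLog, Nat.add_right_comm _ 1 k, add_assoc]
  calc (1 + x) * hI.iteratedDerivLog N (k + 1) x + k * hI.iteratedDerivLog N k x
      = ∑ a ∈ range (N + 1),
          (logCoeff A (a + k + 1) + ((a + k : ℕ) : A) * logCoeff A (a + k)) * hI.dpow a x := by
        rw [add_mul, one_mul, hshift, iteratedDerivLog, iteratedDerivLog, mul_sum,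
          ← sum_add_distrib, ← sum_add_distrib]
        refine sum_congr rfl fun a _ ↦ ?_
        rw [← add_assoc]
        push_cast
        ring
    _ = ∑ a ∈ range (N + 1), (if a + k = 0 then 1 else 0) * hI.dpow a x := by
        simp only [logCoeff_succ_add_mul]
    _ = if k = 0 then 1 else 0 := by
        rcases eq_or_ne k 0 with rfl | hk
        · simp [hI.dpow_zero hx]
        · simp [hk]

lemma one_add_pow_mul_iteratedDerivLog {N : ℕ} (hx : x ∈ I)
    (hxN : ∀ i > N, hI.dpow i x = 0) {k : ℕ} (hk : k ≠ 0) :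
    (1 + x) ^ k * hI.iteratedDerivLog N k x = logCoeff A k := by
  induction k with
  | zero => exact absurd rfl hk
  | succ k ih =>
    have hrec := hI.one_add_mul_iteratedDerivLog_succ hx hxN k
    rcases eq_or_ne k 0 with rfl | hk₀
    · simpa [logCoeff] using hrec
    · have hcoeff := logCoeff_succ_add_mul A k
      rw [if_neg hk₀] at hrec hcoeff
      linear_combination (1 + x) ^ k * hrec - k * ih hk₀ - hcoeff

lemma iteratedDerivLog_zero_add {w : A} (N : ℕ) (hx : x ∈ I) (hw : w ∈ I) :
    hI.iteratedDerivLog N 0 (x + w) =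
      ∑ k ∈ range (N + 1), hI.dpow k w * hI.iteratedDerivLog (N - k) k x := by
  calc hI.iteratedDerivLog N 0 (x + w)
      = ∑ n ∈ range (N + 1), ∑ k ∈ range (n + 1),
          logCoeff A (n - k + k) * (hI.dpow k w * hI.dpow (n - k) x) := by
        refine sum_congr rfl fun n _ ↦ ?_
        rw [add_comm x, hI.dpow_add' hw hx, mul_sum]
        refine sum_congr rfl fun k hk ↦ ?_
        rw [Nat.sub_add_cancel (mem_range_succ_iff.mp hk), add_zero]
    _ = ∑ k ∈ range (N + 1), ∑ a ∈ range (N + 1 - k),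
          logCoeff A (a + k) * (hI.dpow k w * hI.dpow a x) :=
        sum_range_diag_flip (N + 1) fun k a ↦ logCoeff A (a + k) * (hI.dpow k w * hI.dpow a x)
    _ = ∑ k ∈ range (N + 1), hI.dpow k w * hI.iteratedDerivLog (N - k) k x := by
        refine sum_congr rfl fun k hk ↦ ?_
        rw [iteratedDerivLog, mul_sum, Nat.sub_add_comm (mem_range_succ_iff.mp hk)]
        exact sum_congr rfl fun a _ ↦ by ring

theorem log_add_one_add_mul {p q N : ℕ} (hx : x ∈ I) (hy : y ∈ I)
    (hxp : ∀ i > p, hI.dpow i x = 0) (hyq : ∀ i > q, hI.dpow i y = 0) (hN : p + q ≤ N) :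
    hI.log N (x + (1 + x) * y) = hI.log N x + hI.log N y := by
  have hw : (1 + x) * y ∈ I := I.mul_mem_left _ hy
  have hterm : ∀ k ∈ Icc 1 N, hI.dpow k ((1 + x) * y) * hI.iteratedDerivLog (N - k) k x =
      logCoeff A k * hI.dpow k y := by
    intro k hk
    rw [hI.dpow_mul hy]
    rcases le_or_gt k q with hkq | hkq
    · rw [← hI.one_add_pow_mul_iteratedDerivLog (N := N - k) hx (fun i hi ↦ hxp i (by omega))
        (by grind)]
      ring
    · rw [hyq k hkq]
      ring
  have htaylor := hI.iteratedDerivLog_zero_add N hx hw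
  rw [sum_range_succ_eq_add_sum_Icc, sum_congr rfl hterm, hI.dpow_zero hw, one_mul,
    Nat.sub_zero, hI.iteratedDerivLog_zero N hx, hI.iteratedDerivLog_zero N (I.add_mem hx hw)]
    at htaylor
  exact add_left_cancel (htaylor.trans (add_assoc _ _ _))

end DividedPowers

/-- Let `R` be a commutative ring, `I` an ideal with divided
powers `γᵢ`, complete for the `I`-adic topology — here the convergence is
encoded by the (PD-)nilpotency hypothesis `γᵢ(x) = 0` for `i ≥ m`, so that the
series `log(1+x) = Σ_{i≥1} (−1)^{i+1} (i−1)!·γᵢ(x)` is the finite sum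
`Σ_{1 ≤ i ≤ m}`.  Then `log` defines a group homomorphism
`(1 + I, ×) → (I, +)`:  `log((1+x)(1+y)) = log(1+x) + log(1+y)` for
`x, y ∈ I`. -/
theorem stmt_17 {R : Type*} [CommRing R] (I : Ideal R) (dp : DividedPowers I)
    (m : ℕ) (hconv : ∀ x ∈ I, ∀ i : ℕ, m ≤ i → dp.dpow i x = 0) :
    -- the values of log lie in I …
    (∀ x ∈ I,
      (∑ i ∈ Finset.Icc 1 m,
        (-1 : R) ^ (i + 1) * (Nat.factorial (i - 1) : R) * dp.dpow i x) ∈ I) ∧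
    -- … and log((1+x)(1+y)) = log(1+x) + log(1+y), where
    -- (1+x)(1+y) = 1 + (x + y + x*y)
    ∀ x ∈ I, ∀ y ∈ I,
      (∑ i ∈ Finset.Icc 1 m,
        (-1 : R) ^ (i + 1) * (Nat.factorial (i - 1) : R) *
          dp.dpow i (x + y + x * y)) =
      (∑ i ∈ Finset.Icc 1 m,
        (-1 : R) ^ (i + 1) * (Nat.factorial (i - 1) : R) * dp.dpow i x) +
      (∑ i ∈ Finset.Icc 1 m,
        (-1 : R) ^ (i + 1) * (Nat.factorial (i - 1) : R) * dp.dpow i y) := by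
  refine ⟨fun x hx ↦ dp.log_mem m hx, fun x hx y hy ↦ ?_⟩
  have hnil : ∀ w ∈ I, ∀ i > m, dp.dpow i w = 0 := fun w hw i hi ↦ hconv w hw i hi.le
  have hz : x + (1 + x) * y ∈ I := I.add_mem hx (I.mul_mem_left _ hy)
  change dp.log m (x + y + x * y) = dp.log m x + dp.log m y
  rw [show x + y + x * y = x + (1 + x) * y by ring,
    ← dp.log_eq_of_le (hnil _ hz) (m.le_add_right m),
    ← dp.log_eq_of_le (hnil x hx) (m.le_add_right m),
    ← dp.log_eq_of_le (hnil y hy) (m.le_add_right m)]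
  exact dp.log_add_one_add_mul hx hy (hnil x hx) (hnil y hy) le_rfl
end

section
/- Let A be an object killed by pⁿ in an abelian category, sitting in a short exact sequence 0 → A → B →^{pⁿ} A → 0 (B killed by p^{2n}, with the surjection given by multiplication by pⁿ). Let C be another object killed by pⁿ. Then the connecting map s: Hom(A, C) → Ext¹(A, C) associated to the functor Hom(−, C) applied to this sequence, and the canonical map σ: Ext¹(A, C) → Hom(A, C) (sending an extension class to the snake map of multiplication by pⁿ), satisfy σ ∘ s = id on Hom(A, C). -/
open CategoryTheory

/-- (First half of Lemma 3.3.1.)  In an abelian category, let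
`A` be killed by `pⁿ` and sit in a short exact sequence `0 → A →ⁱ B →^π A → 0`
in which the composite `π ≫ i` is multiplication by `pⁿ` on `B` (so the
surjection `π` "is" multiplication by `pⁿ`, as for `0 → H(n) → H(2n) → H(n) → 0`
on a `p`-divisible group).  Let `C` be another object killed by `pⁿ`.  Then
`σ ∘ s = id` on `Hom(A, C)`: for every `f : A ⟶ C`, the pushout extension
`s(f) : 0 → C →^{i_D} D →^{π_D} A → 0` of the given sequence along `f` has snake
morphism `σ(s(f))` equal to `f`, i.e. `π_D ≫ f ≫ i_D = pⁿ • 𝟙 D`. -/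
theorem stmt_19 {C : Type*} [Category C] [Abelian C] (p n : ℕ)
    {A B Cc D : C} (i : A ⟶ B) (π : B ⟶ A)
    (hA : ((p : ℤ) ^ n) • 𝟙 A = 0) (hC : ((p : ℤ) ^ n) • 𝟙 Cc = 0)
    [Mono i] [Epi π] (hiπ : i ≫ π = 0)
    (hmul : π ≫ i = ((p : ℤ) ^ n) • 𝟙 B)
    (f : A ⟶ Cc) (iD : Cc ⟶ D) (u : B ⟶ D) (πD : D ⟶ A)
    -- D is the pushout of i along f, giving the extension s(f)
    (hpo : IsPushout f i iD u)
    (hu : u ≫ πD = π)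
    [Mono iD] [Epi πD] (hiπD : iD ≫ πD = 0) :
    πD ≫ f ≫ iD = ((p : ℤ) ^ n) • 𝟙 D := by
  apply hpo.hom_ext
  · have h0 : ((p : ℤ) ^ n) • iD = (((p : ℤ) ^ n) • 𝟙 Cc) ≫ iD := by simp
    simp only [← Category.assoc, hiπD, Limits.zero_comp, Linear.comp_smul,
      Category.comp_id, h0, hC]
  · have h1 : π ≫ f ≫ iD = (((p : ℤ) ^ n) • 𝟙 B) ≫ u := by
      rw [hpo.w, ← Category.assoc, hmul]
    simp only [← Category.assoc, hu]
    simpa [Linear.smul_comp, Linear.comp_smul] using h1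
end
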